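/- arXiv:2409.12068 — 3 statements merged into one kernel-verified Lean document; each statement's English description precedes it below -/
import Mathlib

section
/- Let x be a finite word over Σ₃ that is an even-r-power, i.e., x = p^r where the word p contains an even number of occurrences of the letter 2 (x has period |p|, prefix p, and |x| = r·|p|). Then for all n ≥ 0, the word τ(g(fⁿ(x))) has period |τ(g(fⁿ(p)))|. -/
abbrev Word := List (Fin 3)
abbrev InfWord := ℕ → Fin 3

/-- `u` is a (finite, contiguous) factor of the infinite word `w`. -/
def IsFactor (w : InfWord) (u : Word) : Prop :=
  ∃ i : ℕ, u = (List.range u.length).map fun k => w (i + k)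

/-- `u` is a prefix of the infinite word `z`. -/
def IsPrefixInf (u : Word) (z : InfWord) : Prop :=
  u = (List.range u.length).map z

/-- `p` is a period of the finite word `w`. -/
def HasPeriod (w : Word) (p : ℕ) : Prop :=
  0 < p ∧ p ≤ w.length ∧ ∀ i : ℕ, i + p < w.length → w.getD (i + p) 0 = w.getD i 0

/-- The infinite word `w` is `α`-power-free: it has no nonempty factor `u`
with a period `p` satisfying `|u|/p ≥ α`. -/
def PowerFree (α : ℚ) (w : InfWord) : Prop :=
  ∀ (u : Word) (p : ℕ), IsFactor w u → u ≠ [] → HasPeriod u p →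
    (u.length : ℚ) / (p : ℚ) < α

/-- The set of palindromic factors of a finite word. -/
def palSet (w : Word) : Set Word := {u | u <:+: w ∧ u.reverse = u}

/-- A finite word of length `n` is rich if it has exactly `n + 1`
distinct palindromic factors (including the empty word). -/
def RichWord (w : Word) : Prop := (palSet w).ncard = w.length + 1

/-- An infinite word is rich if all of its finite factors are rich. -/
def RichSeq (z : InfWord) : Prop := ∀ u : Word, IsFactor z u → RichWord u

def fm : Fin 3 → Word := ![[0, 1], [0, 2, 2], [0, 2]]
def gm : Fin 3 → Word := ![[2, 0], [2, 1], [2]]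
def t1 : Fin 3 → Word :=
  ![[0, 0, 1], [0, 0, 1, 0, 1, 1, 0, 1],
    [0, 0, 1, 0, 1, 1, 0, 1, 0, 0, 1, 0, 1, 1, 0, 1]]
def t2 : Fin 3 → Word :=
  ![[0, 0, 2], [0, 0, 2, 0, 2, 2, 0, 2],
    [0, 0, 2, 0, 2, 2, 0, 2, 0, 0, 2, 0, 2, 2, 0, 2]]

/-- The morphism `f` on finite words. -/
def fList (w : Word) : Word := w.flatMap fm
/-- The morphism `g` on finite words. -/
def gList (w : Word) : Word := w.flatMap gm

def tauAux : Bool → Word → Word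
  | _, [] => []
  | b, a :: w => (if b then t1 a else t2 a) ++ tauAux (!b) w

/-- The transducer `τ` on finite words: `t1` is applied to even-indexed letters
and `t2` to odd-indexed letters. -/
def tauList (w : Word) : Word := tauAux true w

/-- The morphism `f` on infinite words. -/
def fInf (x : InfWord) : InfWord :=
  fun i => (fList ((List.range (i + 1)).map x)).getD i 0
/-- The morphism `g` on infinite words. -/
def gInf (x : InfWord) : InfWord :=
  fun i => (gList ((List.range (i + 1)).map x)).getD i 0
/-- The transducer `τ` on infinite words. -/
def tauInf (x : InfWord) : InfWord :=
  fun i => (tauList ((List.range (i + 1)).map x)).getD i 0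

/-- The critical exponent of an infinite word. -/
noncomputable def criticalExponent (z : InfWord) : ℝ :=
  sSup {r : ℝ | ∃ (u : Word) (p : ℕ), IsFactor z u ∧ u ≠ [] ∧ HasPeriod u p ∧
    r = (u.length : ℝ) / (p : ℝ)}

/-!
A word `x` with prefix `p` has period `|p|` exactly when `x` is a prefix of `p x`. The morphisms
`f` and `g` preserve this shift relation, and so does `τ` applied to `g(fⁿ(p))`, because `τ` is
a morphism on concatenations whose first factor has even length, and `|g(w)|` has the parity of
the number of `2`'s in `w`, which `f` preserves.
-/

theorem hasPeriod_length_iff_prefix_append {x q : Word} (hq : q ≠ []) (hqx : q <+: x) :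
    HasPeriod x q.length ↔ x <+: q ++ x := by
  constructor
  · rintro ⟨-, -, hper⟩
    rw [List.prefix_iff_eq_take]
    refine List.ext_getElem (by simp) fun i hi _ => ?_
    rw [List.getElem_take]
    rcases lt_or_ge i q.length with h | h
    · rw [List.getElem_append_left h, hqx.getElem]
    · have hi' := hper (i - q.length) (by omega)
      rw [Nat.sub_add_cancel h, List.getD_eq_getElem _ _ hi,
        List.getD_eq_getElem _ _ (by omega)] at hi'
      rw [List.getElem_append_right h, hi']
  · intro hshift
    refine ⟨List.length_pos_iff.mpr hq, hqx.length_le, fun i hi => ?_⟩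
    rw [List.getD_eq_getElem _ _ hi, List.getD_eq_getElem _ _ (by omega),
      hshift.getElem hi, List.getElem_append_right (by omega)]
    simp

theorem fList_iterate_append (n : ℕ) (u v : Word) :
    fList^[n] (u ++ v) = fList^[n] u ++ fList^[n] v := by
  induction n with
  | zero => rfl
  | succ k ih => simp only [Function.iterate_succ_apply', ih, fList, List.flatMap_append]

theorem fList_iterate_prefix {u v : Word} (h : u <+: v) (n : ℕ) :
    fList^[n] u <+: fList^[n] v := by
  obtain ⟨t, rfl⟩ := h
  rw [fList_iterate_append]
  exact List.prefix_append _ _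

theorem fList_ne_nil {w : Word} (h : w ≠ []) : fList w ≠ [] := by
  obtain ⟨a, ha⟩ := List.exists_mem_of_ne_nil _ h
  rw [fList, Ne, List.flatMap_eq_nil_iff]
  exact fun hnil => absurd (hnil a ha) (by fin_cases a <;> decide)

theorem fList_iterate_ne_nil {w : Word} (h : w ≠ []) (n : ℕ) : fList^[n] w ≠ [] := by
  induction n with
  | zero => exact h
  | succ k ih => rw [Function.iterate_succ_apply']; exact fList_ne_nil ih

theorem gList_ne_nil {w : Word} (h : w ≠ []) : gList w ≠ [] := by
  obtain ⟨a, ha⟩ := List.exists_mem_of_ne_nil _ h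
  rw [gList, Ne, List.flatMap_eq_nil_iff]
  exact fun hnil => absurd (hnil a ha) (by fin_cases a <;> decide)

theorem fList_count_two_mod_two (w : Word) : (fList w).count 2 % 2 = w.count 2 % 2 := by
  induction w with
  | nil => rfl
  | cons a t ih =>
    rw [fList, List.flatMap_cons, List.count_append, List.count_cons, ← fList]
    fin_cases a <;> simp [fm] <;> omega

theorem fList_iterate_count_two_mod_two (w : Word) (n : ℕ) :
    (fList^[n] w).count 2 % 2 = w.count 2 % 2 := by
  induction n with
  | zero => rfl
  | succ k ih => rw [Function.iterate_succ_apply', fList_count_two_mod_two, ih]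

theorem gList_length_mod_two (w : Word) : (gList w).length % 2 = w.count 2 % 2 := by
  induction w with
  | nil => rfl
  | cons a t ih =>
    rw [gList, List.flatMap_cons, List.length_append, List.count_cons, ← gList]
    fin_cases a <;> simp [gm] <;> omega

theorem tauAux_append (b : Bool) (u v : Word) :
    tauAux b (u ++ v) = tauAux b u ++ tauAux (if u.length % 2 = 0 then b else !b) v := by
  induction u generalizing b with
  | nil => simp [tauAux]
  | cons a t ih =>
    simp only [List.cons_append, tauAux, ih, List.append_assoc, List.length_cons]
    rcases Nat.mod_two_eq_zero_or_one t.length with h | h <;> simp [h, Nat.add_mod]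

theorem tauList_append_of_even {u : Word} (hu : u.length % 2 = 0) (v : Word) :
    tauList (u ++ v) = tauList u ++ tauList v := by
  rw [tauList, tauAux_append, if_pos hu]
  rfl

theorem tauList_prefix {u v : Word} (h : u <+: v) : tauList u <+: tauList v := by
  obtain ⟨t, rfl⟩ := h
  rw [tauList, tauList, tauAux_append]
  exact List.prefix_append _ _

theorem tauList_ne_nil {w : Word} (h : w ≠ []) : tauList w ≠ [] := by
  obtain ⟨a, t, rfl⟩ := List.exists_cons_of_ne_nil h
  fin_cases a <;> simp [tauList, tauAux, t1]

/-- If `x` is an even-`r`-power with repeated prefix `p` (so `p` has an even number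
of `2`'s), then for all `n ≥ 0` the word `τ(g(fⁿ(x)))` has period `|τ(g(fⁿ(p)))|`. -/
theorem even_power_periods (x p : Word) (hp : p ≠ []) (hpre : p <+: x)
    (hper : HasPeriod x p.length) (heven : p.count 2 % 2 = 0) (n : ℕ) :
    HasPeriod (tauList (gList (fList^[n] x))) (tauList (gList (fList^[n] p))).length := by
  set P := gList (fList^[n] p)
  set X := gList (fList^[n] x)
  have hPX : P <+: X := (fList_iterate_prefix hpre n).flatMap gm
  have hP_ne : P ≠ [] := gList_ne_nil (fList_iterate_ne_nil hp n)
  have hP_even : P.length % 2 = 0 := by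
    rw [gList_length_mod_two, fList_iterate_count_two_mod_two, heven]
  have hshift : X <+: P ++ X := by
    have h := (fList_iterate_prefix
      ((hasPeriod_length_iff_prefix_append hp hpre).mp hper) n).flatMap gm
    rwa [fList_iterate_append, List.flatMap_append] at h
  rw [hasPeriod_length_iff_prefix_append (tauList_ne_nil hP_ne) (tauList_prefix hPX),
    ← tauList_append_of_even hP_even]
  exact tauList_prefix hshift
end

section
/- Let w be a finite word over Σ₃. If w is middle-class, then the word τ(w)·00 (the image of w under the transducer τ followed by the two letters 00) is not rich. -/
/-- A word `w` is middle-class if it begins with `2` and every odd-length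
palindromic prefix of `w` occurs again in `w` starting at an even index. -/
def MiddleClass (w : Word) : Prop :=
  w.head? = some 2 ∧
    ∀ u : Word, u <+: w → u.reverse = u → u.length % 2 = 1 →
      ∃ p s : Word, w = p ++ u ++ s ∧ p ≠ [] ∧ p.length % 2 = 0

/-!
Both `t₁(a)` and `t₂(a)` are made of one or two pieces `00c` with `c` a palindrome free of `00`
(`c ∈ {1, 101101}` for `t₁`, `c ∈ {2, 202202}` for `t₂`), so `τ(w)·00 = 00c₁00c₂⋯00cₙ00` and every
occurrence of `00` in it is one of these separators.

By Droubay–Justin–Pirillo each letter creates at most one new palindromic factor, so a rich word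
has a palindromic prefix that does not occur again. For `τ(w)·00` such a prefix is
`00c₁⋯00cₖ00` with `c₁⋯cₖ` a palindromic sequence of blocks. As the block letter records the
parity of the input index, the blocks `c₁⋯cₖ` are the image of an odd-length palindromic prefix
`u` of `w`, and a middle-class `w` has another occurrence of `u` at an even index, which
reproduces the prefix later in `τ(w)·00`. A block sequence stopping halfway through the image of a
letter `2` is the image of some `u·1`; as `w` begins with `2`, this is a palindrome only for `u`
empty, and then its single block is repeated right after it.
-/

lemma palSet_finite (w : Word) : (palSet w).Finite :=
  w.sublists.toFinset.finite_toSet.subset fun _ hu => by simpa using hu.1.sublist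

lemma palSet_cons_sdiff_subsingleton (a : Fin 3) (w : Word) :
    (palSet (a :: w) \ palSet w).Subsingleton := by
  have prefix_of_mem : ∀ u ∈ palSet (a :: w) \ palSet w, u <+: a :: w := by
    rintro u ⟨⟨hu, hpal⟩, hnew⟩
    exact (List.infix_cons_iff.mp hu).resolve_right fun h => hnew ⟨h, hpal⟩
  intro u hu v hv
  wlog huv : u.length ≤ v.length generalizing u v
  · exact (this hv hu (by omega)).symm
  obtain ⟨s, rfl⟩ : u <:+ v := by
    rw [← List.reverse_prefix, hu.1.2, hv.1.2]
    exact List.prefix_of_prefix_length_le (prefix_of_mem u hu) (prefix_of_mem _ hv) huv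
  -- a nonempty `s` would make `u` reoccur one position later in `a :: w`
  obtain _ | ⟨x, s⟩ := s
  · rfl
  obtain ⟨t, ht⟩ := prefix_of_mem _ hv
  simp only [List.cons_append, List.append_assoc, List.cons.injEq] at ht
  exact absurd ⟨⟨s, t, by simp [← ht.2]⟩, hu.1.2⟩ hu.2

lemma ncard_palSet_le (w : Word) : (palSet w).ncard ≤ w.length + 1 := by
  induction w with
  | nil =>
    have : palSet [] = {[]} := by
      ext u
      simp +contextual [palSet, List.infix_nil]
    simp [this]
  | cons a w ih =>
    calc (palSet (a :: w)).ncard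
        ≤ (palSet (a :: w) \ palSet w).ncard + (palSet w).ncard :=
          Set.ncard_le_ncard_sdiff_add_ncard _ _ (palSet_finite w)
      _ ≤ 1 + (w.length + 1) :=
          add_le_add ((Set.ncard_le_one ((palSet_finite _).sdiff)).mpr
            (palSet_cons_sdiff_subsingleton a w)) ih
      _ = (a :: w).length + 1 := by simp; omega

lemma RichWord.exists_palindrome_prefix_not_infix_tail {z : Word} (hz : z ≠ [])
    (hrich : RichWord z) : ∃ v : Word, v <+: z ∧ v.reverse = v ∧ ¬ v <:+: z.tail := by
  obtain ⟨a, w, rfl⟩ := List.exists_cons_of_ne_nil hz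
  obtain ⟨v, ⟨hv, hpal⟩, hnew⟩ := Set.not_subset.mp fun hsub : palSet (a :: w) ⊆ palSet w => by
    have := Set.ncard_le_ncard hsub (palSet_finite w)
    have := ncard_palSet_le w
    rw [RichWord, List.length_cons] at hrich
    omega
  refine ⟨v, ?_, hpal, fun h => hnew ⟨h, hpal⟩⟩
  exact (List.infix_cons_iff.mp hv).resolve_right fun h => hnew ⟨h, hpal⟩

def IsBlock (c : Word) : Prop :=
  c ≠ [] ∧ c.head? ≠ some 0 ∧ c.getLast? ≠ some 0 ∧ ¬ [0, 0] <:+: c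

def glue (cs : List Word) : Word := cs.flatMap ([0, 0] ++ ·)

def closedGlue (cs : List Word) : Word := glue cs ++ [0, 0]

@[simp] lemma glue_nil : glue [] = [] := rfl

@[simp] lemma glue_cons (c : Word) (cs : List Word) : glue (c :: cs) = 0 :: 0 :: (c ++ glue cs) :=
  rfl

@[simp] lemma glue_append (cs ds : List Word) : glue (cs ++ ds) = glue cs ++ glue ds := by
  simp [glue]

lemma closedGlue_nil : closedGlue [] = [0, 0] := rfl

lemma closedGlue_cons (c : Word) (cs : List Word) :
    closedGlue (c :: cs) = 0 :: 0 :: (c ++ closedGlue cs) := by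
  simp [closedGlue]

lemma closedGlue_eq (cs : List Word) : closedGlue cs = 0 :: 0 :: cs.flatMap (· ++ [0, 0]) := by
  induction cs with
  | nil => rfl
  | cons c cs ih => simp [closedGlue_cons, ih]

lemma IsBlock.suffix_eq_nil {p c t s : Word} (hc : IsBlock (p ++ c))
    (h : 0 :: 0 :: s = c ++ t) : c = [] := by
  match c, h with
  | [], _ => rfl
  | [_], h =>
    obtain ⟨rfl, -⟩ := List.cons.inj h
    exact absurd (by simp) hc.2.2.1
  | _ :: _ :: c, h =>
    simp only [List.cons_append, List.cons.injEq] at h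
    obtain ⟨rfl, rfl, -⟩ := h
    exact absurd ⟨p, c, by simp⟩ hc.2.2.2

lemma IsBlock.eq_of_append_eq_append {c₁ c₂ r₁ r₂ : Word} (h₁ : IsBlock c₁) (h₂ : IsBlock c₂)
    (h : c₁ ++ 0 :: 0 :: r₁ = c₂ ++ 0 :: 0 :: r₂) : c₁ = c₂ := by
  rcases List.append_eq_append_iff.mp h with ⟨c, rfl, hc⟩ | ⟨c, rfl, hc⟩
  · simp [h₂.suffix_eq_nil hc]
  · simp [h₁.suffix_eq_nil hc]

lemma eq_of_closedGlue_eq {cs₁ cs₂ : List Word} (h₁ : ∀ c ∈ cs₁, IsBlock c)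
    (h₂ : ∀ c ∈ cs₂, IsBlock c) (h : closedGlue cs₁ = closedGlue cs₂) : cs₁ = cs₂ := by
  induction cs₁ generalizing cs₂ with
  | nil =>
    obtain _ | ⟨c, cs₂⟩ := cs₂
    · rfl
    · simp [closedGlue_nil, closedGlue_cons, (h₂ c (by simp)).1] at h
  | cons c₁ cs₁ ih =>
    obtain _ | ⟨c₂, cs₂⟩ := cs₂
    · simp [closedGlue_nil, closedGlue_cons, (h₁ c₁ (by simp)).1] at h
    · simp only [closedGlue_cons, List.cons.injEq, true_and] at h
      rw [closedGlue_eq, closedGlue_eq] at h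
      obtain rfl := (h₁ c₁ (by simp)).eq_of_append_eq_append (h₂ c₂ (by simp)) h
      rw [← closedGlue_eq, ← closedGlue_eq, List.append_cancel_left_eq] at h
      rw [ih (fun c hc => h₁ c (by simp [hc])) (fun c hc => h₂ c (by simp [hc])) h]

/-- Every occurrence of `00` in `closedGlue cs` is one of its separators. -/
lemma exists_prefix_eq_closedGlue {cs : List Word} (hcs : ∀ c ∈ cs, IsBlock c) {pre suf : Word}
    (h : closedGlue cs = pre ++ 0 :: 0 :: suf) : ∃ ds, ds <+: cs ∧ pre ++ [0, 0] = closedGlue ds := by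
  induction cs generalizing pre with
  | nil =>
    obtain rfl : pre = [] := List.eq_nil_of_length_eq_zero <| by
      have := congrArg List.length h
      simp [closedGlue_nil] at this
      omega
    exact ⟨[], List.nil_prefix, rfl⟩
  | cons c cs ih =>
    have hc := hcs c (by simp)
    rw [closedGlue_cons] at h
    match pre, h with
    | [], _ => exact ⟨[], List.nil_prefix, rfl⟩
    | [_], h =>
      obtain ⟨x, c, rfl⟩ := List.exists_cons_of_ne_nil hc.1
      simp only [List.cons_append, List.nil_append, List.cons.injEq] at h
      exact absurd (by simp [h.2.2.1]) hc.2.1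
    | _ :: _ :: pre, h =>
      simp only [List.cons_append, List.cons.injEq] at h
      obtain ⟨rfl, rfl, h⟩ := h
      rcases List.append_eq_append_iff.mp h with ⟨a, rfl, ha⟩ | ⟨c', rfl, hc'⟩
      · obtain ⟨ds, hds, heq⟩ := ih (fun c hc => hcs c (by simp [hc])) ha
        exact ⟨c :: ds, List.cons_prefix_cons.mpr ⟨rfl, hds⟩, by simp [closedGlue_cons, ← heq]⟩
      · refine ⟨[pre ++ c'], by simp, ?_⟩
        simp [hc.suffix_eq_nil hc', closedGlue]

lemma closedGlue_infix_tail {cs ds : List Word} (hcs : cs ≠ []) (h : ds <:+: cs.tail) :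
    closedGlue ds <:+: (closedGlue cs).tail := by
  obtain ⟨c, cs, rfl⟩ := List.exists_cons_of_ne_nil hcs
  obtain ⟨P, S, rfl⟩ := h
  refine ⟨0 :: (c ++ glue P), S.flatMap (· ++ [0, 0]), ?_⟩
  simp [closedGlue, ← closedGlue_eq]

lemma closedGlue_reverse {cs : List Word} (hcs : ∀ c ∈ cs, c.reverse = c) :
    (closedGlue cs).reverse = closedGlue cs.reverse := by
  induction cs with
  | nil => rfl
  | cons c cs ih =>
    calc (closedGlue (c :: cs)).reverse = (closedGlue cs).reverse ++ c.reverse ++ [0, 0] := by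
          simp [closedGlue_cons]
      _ = closedGlue (c :: cs).reverse := by
          rw [ih fun c hc => hcs c (by simp [hc]), hcs c (by simp)]
          simp [closedGlue]

lemma eq_closedGlue_of_palindrome_prefix {cs : List Word}
    (hcs : ∀ c ∈ cs, IsBlock c ∧ c.reverse = c) {v : Word} (hv : v <+: closedGlue cs)
    (hpal : v.reverse = v) (hlen : 2 ≤ v.length) :
    ∃ ds, ds <+: cs ∧ ds.reverse = ds ∧ v = closedGlue ds := by
  obtain ⟨t, ht⟩ := hv
  obtain _ | ⟨x, _ | ⟨y, v'⟩⟩ := v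
  · simp at hlen
  · simp at hlen
  have ht' := ht
  rw [closedGlue_eq] at ht'
  simp only [List.cons_append, List.cons.injEq] at ht'
  obtain ⟨rfl, rfl, -⟩ := ht'
  have hv : 0 :: 0 :: v' = v'.reverse ++ [0, 0] := by
    conv_lhs => rw [← hpal]
    simp
  obtain ⟨ds, hds, heq⟩ := exists_prefix_eq_closedGlue (fun c hc => (hcs c hc).1)
    (suf := t) (pre := v'.reverse) (by rw [← ht, hv]; simp)
  have hblocks : ∀ c ∈ ds, IsBlock c ∧ c.reverse = c := fun c hc => hcs c (hds.subset hc)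
  refine ⟨ds, hds, eq_of_closedGlue_eq (fun c hc => (hblocks c (List.mem_reverse.mp hc)).1)
    (fun c hc => (hblocks c hc).1) ?_, hv.trans heq⟩
  rw [← closedGlue_reverse fun c hc => (hblocks c hc).2, ← heq, ← hv, hpal]

lemma exists_palindrome_prefix_not_infix_tail_of_closedGlue {cs : List Word}
    (hcs : ∀ c ∈ cs, IsBlock c ∧ c.reverse = c) (hne : cs ≠ []) {v : Word}
    (hv : v <+: closedGlue cs) (hpal : v.reverse = v) (hnew : ¬ v <:+: (closedGlue cs).tail) :
    ∃ ds, ds <+: cs ∧ ds ≠ [] ∧ ds.reverse = ds ∧ ¬ ds <:+: cs.tail := by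
  have h00 : [0, 0] <:+: (closedGlue cs).tail :=
    closedGlue_infix_tail (ds := []) hne List.nil_infix
  by_cases hlen : 2 ≤ v.length
  · obtain ⟨ds, hds, hdspal, rfl⟩ := eq_closedGlue_of_palindrome_prefix hcs hv hpal hlen
    refine ⟨ds, hds, ?_, hdspal, fun h => hnew (closedGlue_infix_tail hne h)⟩
    rintro rfl
    exact hnew h00
  · have : v <+: [0, 0] := List.prefix_of_prefix_length_le hv ⟨_, (closedGlue_eq cs).symm⟩
      (by simp; omega)
    exact absurd (this.isInfix.trans h00) hnew

def blockLetter (i : ℕ) : Fin 3 := if i % 2 = 0 then 1 else 2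

def longBlock (x : Fin 3) : Word := [x, 0, x, x, 0, x]

def letterBlocks (x : Fin 3) : Fin 3 → List Word
  | 0 => [[x]]
  | 1 => [longBlock x]
  | _ => [longBlock x, longBlock x]

/-- The blocks of the `τ`-image of `w` when its first letter sits at index `i` of the input. -/
def tauBlocks : ℕ → Word → List Word
  | _, [] => []
  | i, a :: w => letterBlocks (blockLetter i) a ++ tauBlocks (i + 1) w

lemma blockLetter_eq_blockLetter_iff {i j : ℕ} : blockLetter i = blockLetter j ↔ i % 2 = j % 2 := by
  unfold blockLetter
  split_ifs <;> simp <;> omega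

lemma blockLetter_ne_zero (i : ℕ) : blockLetter i ≠ 0 := by
  unfold blockLetter
  split_ifs <;> decide

lemma isBlock_singleton {x : Fin 3} (hx : x ≠ 0) : IsBlock [x] :=
  ⟨by simp, by simpa, by simpa, fun h => by simpa using h.length_le⟩

lemma isBlock_longBlock {x : Fin 3} (hx : x ≠ 0) : IsBlock (longBlock x) := by
  unfold IsBlock longBlock
  revert hx
  fin_cases x <;> decide

lemma longBlock_reverse (x : Fin 3) : (longBlock x).reverse = longBlock x := rfl

lemma longBlock_ne_singleton (x y : Fin 3) : longBlock x ≠ [y] := by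
  simp [longBlock]

lemma letterBlocks_isBlock {x : Fin 3} (hx : x ≠ 0) (a : Fin 3) :
    ∀ c ∈ letterBlocks x a, IsBlock c ∧ c.reverse = c := by
  fin_cases a <;> simp [letterBlocks, isBlock_singleton hx, isBlock_longBlock hx, longBlock_reverse]

lemma letterBlocks_reverse (x a : Fin 3) : (letterBlocks x a).reverse = letterBlocks x a := by
  fin_cases a <;> rfl

lemma tauAux_eq_glue (w : Word) (i : ℕ) : tauAux (decide (i % 2 = 0)) w = glue (tauBlocks i w) := by
  induction w generalizing i with
  | nil => rfl
  | cons a w ih =>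
    have hnot : (!decide (i % 2 = 0)) = decide ((i + 1) % 2 = 0) := by
      rcases Nat.mod_two_eq_zero_or_one i with h | h <;> simp [h, Nat.add_mod]
    have hhead : (if decide (i % 2 = 0) then t1 a else t2 a) =
        glue (letterBlocks (blockLetter i) a) := by
      by_cases h : i % 2 = 0 <;> simp only [h, blockLetter] <;> fin_cases a <;> rfl
    simp only [tauAux, tauBlocks, glue_append, hnot, ih, hhead]

lemma tauList_append_zero_zero (w : Word) : tauList w ++ [0, 0] = closedGlue (tauBlocks 0 w) :=
  congrArg (· ++ [0, 0]) (tauAux_eq_glue w 0)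

lemma tauBlocks_isBlock (i : ℕ) (w : Word) : ∀ c ∈ tauBlocks i w, IsBlock c ∧ c.reverse = c := by
  induction w generalizing i with
  | nil => simp [tauBlocks]
  | cons a w ih =>
    simp only [tauBlocks, List.mem_append]
    rintro c (hc | hc)
    exacts [letterBlocks_isBlock (blockLetter_ne_zero i) a c hc, ih _ c hc]

lemma tauBlocks_congr {i j : ℕ} (h : i % 2 = j % 2) (w : Word) : tauBlocks i w = tauBlocks j w := by
  induction w generalizing i j with
  | nil => rfl
  | cons a w ih =>
    simp only [tauBlocks, blockLetter_eq_blockLetter_iff.mpr h,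
      ih (by omega : (i + 1) % 2 = (j + 1) % 2)]

lemma tauBlocks_append (i : ℕ) (u v : Word) :
    tauBlocks i (u ++ v) = tauBlocks i u ++ tauBlocks (i + u.length) v := by
  induction u generalizing i with
  | nil => rfl
  | cons a u ih =>
    simp only [List.cons_append, tauBlocks, ih, List.append_assoc, List.length_cons]
    rw [Nat.add_right_comm, Nat.add_assoc]

lemma tauBlocks_reverse (i : ℕ) (u : Word) :
    (tauBlocks i u).reverse = tauBlocks (i + u.length + 1) u.reverse := by
  induction u generalizing i with
  | nil => rfl
  | cons a u ih =>
    rw [tauBlocks, List.reverse_append, ih, letterBlocks_reverse, List.reverse_cons,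
      tauBlocks_append, List.length_reverse]
    simp only [List.length_cons, tauBlocks, List.append_nil]
    congr 1
    · congr 1
      omega
    · congr 1
      exact blockLetter_eq_blockLetter_iff.mpr (by omega)

lemma tauBlocks_eq_cons {i : ℕ} {w : Word} (hw : w ≠ []) :
    ∃ c cs, tauBlocks i w = c :: cs ∧ c.head? = some (blockLetter i) := by
  obtain ⟨a, w, rfl⟩ := List.exists_cons_of_ne_nil hw
  fin_cases a <;> exact ⟨_, _, rfl, rfl⟩

lemma tauBlocks_succ_ne_cons_longBlock {i : ℕ} {w : Word} {cs : List Word} :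
    tauBlocks (i + 1) w ≠ longBlock (blockLetter i) :: cs := by
  intro h
  obtain rfl | hw := eq_or_ne w []
  · simp [tauBlocks] at h
  obtain ⟨c, cs', hc, hhead⟩ := tauBlocks_eq_cons (i := i + 1) hw
  obtain ⟨rfl, -⟩ := List.cons.inj (hc.symm.trans h)
  have := blockLetter_eq_blockLetter_iff.mp (Option.some.inj hhead).symm
  omega

lemma tauBlocks_injective (i : ℕ) : Function.Injective (tauBlocks i) := by
  intro u₁ u₂ h
  induction u₁ generalizing i u₂ with
  | nil =>
    obtain _ | ⟨a, u₂⟩ := u₂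
    · rfl
    · fin_cases a <;> simp [tauBlocks, letterBlocks] at h
  | cons a₁ u₁ ih =>
    obtain _ | ⟨a₂, u₂⟩ := u₂
    · fin_cases a₁ <;> simp [tauBlocks, letterBlocks] at h
    · simp only [tauBlocks] at h
      obtain rfl : a₁ = a₂ := by
        fin_cases a₁ <;> fin_cases a₂ <;>
          simp [letterBlocks, longBlock_ne_singleton, (longBlock_ne_singleton _ _).symm] at h ⊢
        exacts [tauBlocks_succ_ne_cons_longBlock h, tauBlocks_succ_ne_cons_longBlock h.symm]
      rw [ih (i + 1) (List.append_cancel_left h)]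

lemma tauBlocks_ne_nil {i : ℕ} {w : Word} (hw : w ≠ []) : tauBlocks i w ≠ [] := by
  obtain ⟨c, cs, h, -⟩ := tauBlocks_eq_cons (i := i) hw
  simp [h]

lemma prefix_letterBlocks {x a : Fin 3} {ds : List Word} (h : ds <+: letterBlocks x a) :
    ds = [] ∨ ds = letterBlocks x a ∨ (a = 2 ∧ ds = [longBlock x]) := by
  rw [← List.mem_inits] at h
  fin_cases a <;> simp [letterBlocks] at h <;> tauto

/-- `tauBlocks i (u ++ [1])` is `tauBlocks i u` followed by the first of the two blocks that
`tauBlocks i (u ++ [2])` adds. -/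
lemma prefix_tauBlocks {i : ℕ} {w : Word} {ds : List Word} (h : ds <+: tauBlocks i w) :
    (∃ u, u <+: w ∧ ds = tauBlocks i u) ∨ ∃ u, u ++ [2] <+: w ∧ ds = tauBlocks i (u ++ [1]) := by
  induction w generalizing i ds with
  | nil => exact .inl ⟨[], List.nil_prefix, List.prefix_nil.mp h⟩
  | cons a w ih =>
    obtain ⟨t, ht⟩ := h
    rcases List.append_eq_append_iff.mp ht with ⟨c, hc, -⟩ | ⟨c, rfl, hc⟩
    · rcases prefix_letterBlocks ⟨c, hc.symm⟩ with rfl | rfl | ⟨rfl, rfl⟩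
      · exact .inl ⟨[], List.nil_prefix, rfl⟩
      · exact .inl ⟨[a], by simp, by simp [tauBlocks]⟩
      · exact .inr ⟨[], by simp, by simp [tauBlocks, letterBlocks]⟩
    · rcases ih ⟨t, hc.symm⟩ with ⟨u, hu, rfl⟩ | ⟨u, hu, rfl⟩
      · exact .inl ⟨a :: u, List.cons_prefix_cons.mpr ⟨rfl, hu⟩, by simp [tauBlocks]⟩
      · exact .inr ⟨a :: u, List.cons_prefix_cons.mpr ⟨rfl, hu⟩, by simp [tauBlocks]⟩

lemma palindrome_odd_of_tauBlocks_palindrome {i : ℕ} {u : Word} (hu : u ≠ [])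
    (h : (tauBlocks i u).reverse = tauBlocks i u) : u.reverse = u ∧ u.length % 2 = 1 := by
  rw [tauBlocks_reverse] at h
  -- the first blocks of both sides start with the letter that encodes the parity of the index
  have hodd : u.length % 2 = 1 := by
    obtain ⟨c, cs, hc, hhead⟩ := tauBlocks_eq_cons (i := i) hu
    obtain ⟨c', cs', hc', hhead'⟩ :=
      tauBlocks_eq_cons (i := i + u.length + 1) (List.reverse_ne_nil_iff.mpr hu)
    rw [hc, hc', List.cons.injEq] at h
    rw [h.1, hhead, Option.some_inj, blockLetter_eq_blockLetter_iff] at hhead'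
    omega
  rw [tauBlocks_congr (by omega : (i + u.length + 1) % 2 = i % 2)] at h
  exact ⟨tauBlocks_injective i h, hodd⟩

lemma MiddleClass.infix_tail_of_palindrome_prefix_tauBlocks {w : Word} (hw : MiddleClass w) {ds : List Word}
    (hds : ds <+: tauBlocks 0 w) (hne : ds ≠ []) (hpal : ds.reverse = ds) :
    ds <:+: (tauBlocks 0 w).tail := by
  obtain ⟨hhead, hmid⟩ := hw
  obtain ⟨w, rfl⟩ := List.head?_eq_some_iff.mp hhead
  have infix_tail {P S : List Word} (hP : P ≠ []) (h : tauBlocks 0 (2 :: w) = P ++ ds ++ S) :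
      ds <:+: (tauBlocks 0 (2 :: w)).tail := by
    obtain ⟨x, P, rfl⟩ := List.exists_cons_of_ne_nil hP
    exact ⟨P, S, by simp [h]⟩
  rcases prefix_tauBlocks hds with ⟨u, hu, rfl⟩ | ⟨u, hu, rfl⟩
  · obtain ⟨hupal, hodd⟩ := palindrome_odd_of_tauBlocks_palindrome (by rintro rfl; exact hne rfl) hpal
    obtain ⟨p, s, hw, hp, hpeven⟩ := hmid u hu hupal hodd
    refine infix_tail (tauBlocks_ne_nil (i := 0) hp) (S := tauBlocks (p.length + u.length) s) ?_
    rw [hw, tauBlocks_append, tauBlocks_append,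
      tauBlocks_congr (by omega : (0 + p.length) % 2 = 0 % 2) u]
    simp
  · obtain ⟨hupal, -⟩ := palindrome_odd_of_tauBlocks_palindrome (by simp) hpal
    obtain _ | ⟨x, u⟩ := u
    · exact ⟨[], tauBlocks 1 w, by simp [tauBlocks, letterBlocks]⟩
    · obtain rfl : x = 2 := (List.cons_prefix_cons.mp hu).1
      simpa using congrArg List.head? hupal

/-- If `w` is middle-class, then `τ(w)·00` is not rich. -/
theorem middle_to_nonrich (w : Word) (hw : MiddleClass w) :
    ¬ RichWord (tauList w ++ [0, 0]) := by
  intro hrich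
  rw [tauList_append_zero_zero] at hrich
  have hne : tauBlocks 0 w ≠ [] := tauBlocks_ne_nil fun h => by simp [h, MiddleClass] at hw
  obtain ⟨v, hv, hpal, hnew⟩ :=
    hrich.exists_palindrome_prefix_not_infix_tail (by simp [closedGlue_eq])
  obtain ⟨ds, hds, hdsne, hdspal, hdsnew⟩ :=
    exists_palindrome_prefix_not_infix_tail_of_closedGlue (tauBlocks_isBlock 0 w) hne hv hpal hnew
  exact hdsnew (hw.infix_tail_of_palindrome_prefix_tauBlocks hds hdsne hdspal)
end

section
/- Let x = f^ω(0). Every palindromic factor w of x has a unique palindromic extension in x: there is exactly one letter a ∈ Σ₃ such that a·w·a is a factor of x. -/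
/-!
Since `x = f(x)`, the word `x` is the concatenation of the blocks `f(xⱼ) ∈ {01, 022, 02}`, and `0`
occurs exactly at the block starts. The words `f(a)0` are pairwise prefix-incomparable, so every
occurrence of `f(v)0` is aligned with an occurrence of `v`, and the letters around it are read off
the neighbouring blocks. Hence a palindrome beginning with `0` is `f(v)0`, and one beginning with
`20` is `2f(v)02`, for a shorter palindrome `v`: `f(v)0` extends by `1` if `v` extends by `0` and by
`2` otherwise, while `2f(v)02` extends by `2` or `0` according as `v` extends by `1` or `2`. The
remaining shapes `ε`, `1⋯1`, `2`, `22⋯22` are settled by the factors of length two and three. For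
the induction to go through one carries along that a palindrome occurring between two nonzero
letters does not extend by `0`.
-/

namespace PalindromicExtension

def OccursAt (x : InfWord) (i : ℕ) (u : Word) : Prop := (List.range' i u.length).map x = u

variable {x : InfWord}

theorem isFactor_iff_exists_occursAt {u : Word} : IsFactor x u ↔ ∃ i, OccursAt x i u := by
  simp only [IsFactor, OccursAt, List.range'_eq_map_range, List.map_map, Function.comp_def,
    eq_comm]

theorem occursAt_append {i : ℕ} {u v : Word} :
    OccursAt x i (u ++ v) ↔ OccursAt x i u ∧ OccursAt x (i + u.length) v := by
  simp only [OccursAt, List.length_append, ← List.range'_append_1, List.map_append]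
  exact ⟨fun h => List.append_inj h (by simp), fun ⟨h₁, h₂⟩ => by rw [h₁, h₂]⟩

theorem occursAt_cons {i : ℕ} {a : Fin 3} {u : Word} :
    OccursAt x i (a :: u) ↔ x i = a ∧ OccursAt x (i + 1) u := by
  simp [OccursAt, List.range'_succ]

theorem occursAt_singleton {i : ℕ} {a : Fin 3} : OccursAt x i [a] ↔ x i = a := by
  simp [OccursAt]

theorem OccursAt.eq_of_length_eq {i : ℕ} {u v : Word} (hu : OccursAt x i u) (hv : OccursAt x i v)
    (h : u.length = v.length) : u = v := by
  rw [← hu, ← hv, h]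

theorem OccursAt.eq_take_drop {i k : ℕ} {U u : Word} (hU : OccursAt x i U)
    (hu : OccursAt x (i + k) u) (hk : k + u.length ≤ U.length) :
    u = (U.drop k).take u.length := by
  rw [← hU, ← List.map_drop, ← List.map_take, List.drop_range',
    List.take_range'_of_length_ge (by omega)]
  simpa using hu.symm

theorem OccursAt.isPrefix {i : ℕ} {U u : Word} (hU : OccursAt x i U) (hu : OccursAt x i u)
    (h : u.length ≤ U.length) : u <+: U := by
  rw [hU.eq_take_drop (k := 0) hu (by omega), List.drop_zero]
  exact List.take_prefix _ _

theorem OccursAt.isSuffix {i k : ℕ} {U u : Word} (hU : OccursAt x i U) (hu : OccursAt x k u)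
    (hik : i ≤ k) (h : k + u.length = i + U.length) : u <:+ U := by
  obtain ⟨k, rfl⟩ := Nat.exists_eq_add_of_le hik
  rw [hU.eq_take_drop hu (by omega), List.take_of_length_le (by simp; omega)]
  exact List.drop_suffix _ _

theorem OccursAt.isInfix {i k : ℕ} {U u : Word} (hU : OccursAt x i U) (hu : OccursAt x k u)
    (hik : i ≤ k) (h : k + u.length ≤ i + U.length) : u <:+: U := by
  obtain ⟨k, rfl⟩ := Nat.exists_eq_add_of_le hik
  rw [hU.eq_take_drop hu (by omega)]
  exact (List.take_prefix _ _).isInfix.trans (List.drop_suffix _ _).isInfix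

theorem _root_.IsFactor.of_infix {U u : Word} (hU : IsFactor x U) (h : u <:+: U) :
    IsFactor x u := by
  obtain ⟨s, t, rfl⟩ := h
  obtain ⟨i, hi⟩ := isFactor_iff_exists_occursAt.1 hU
  exact isFactor_iff_exists_occursAt.2 ⟨_, (occursAt_append.1 (occursAt_append.1 hi).1).2⟩

theorem OccursAt.getD {i k : ℕ} {u : Word} (hu : OccursAt x i u) (hk : k < u.length) :
    x (i + k) = u.getD k 0 := by
  rw [← hu, List.getD_eq_getElem _ _ (by simpa using hk)]
  simp

@[simp] theorem fList_nil : fList [] = [] := rfl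

@[simp] theorem fList_cons (a : Fin 3) (v : Word) : fList (a :: v) = fm a ++ fList v :=
  List.flatMap_cons

@[simp] theorem fList_append (u v : Word) : fList (u ++ v) = fList u ++ fList v :=
  List.flatMap_append

theorem two_le_length_fm (a : Fin 3) : 2 ≤ (fm a).length := by
  fin_cases a <;> decide

theorem two_mul_length_le_length_fList (v : Word) : 2 * v.length ≤ (fList v).length := by
  induction v with
  | nil => simp
  | cons a v ih =>
    simp only [fList_cons, List.length_append, List.length_cons]
    grind [two_le_length_fm]

theorem fm_eq_cons (a : Fin 3) : fm a = 0 :: (fm a).tail := by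
  fin_cases a <;> rfl

theorem fm_getD_eq_zero :
    ∀ (a : Fin 3) (k : ℕ), k < (fm a).length → (fm a).getD k 0 = 0 → k = 0 := by
  decide

theorem exists_fList_append_zero_eq_cons (v : Word) : ∃ r, fList v ++ [0] = 0 :: r := by
  rcases v with _ | ⟨a, v⟩
  · exact ⟨[], rfl⟩
  · fin_cases a <;> exact ⟨_, rfl⟩

theorem eq_of_fm_append_zero_prefix : ∀ a b : Fin 3, fm a ++ [0] <+: fm b ++ [0] → a = b := by
  decide

theorem cons_zero_reverse_fList (v : Word) :
    0 :: (fList v).reverse = fList v.reverse ++ [0] := by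
  induction v with
  | nil => rfl
  | cons a v ih =>
    have hfm : 0 :: (fm a).reverse = fm a ++ [0] := by fin_cases a <;> rfl
    simp only [fList_cons, List.reverse_append, List.reverse_cons, fList_append,
      ← List.cons_append, ih, List.append_assoc, hfm, fList_nil, List.nil_append,
      List.singleton_append]

theorem fList_append_zero_injective {u v : Word} (h : fList u ++ [0] = fList v ++ [0]) :
    u = v := by
  induction u generalizing v with
  | nil =>
    rcases v with _ | ⟨b, v⟩
    · rfl
    · have := congrArg List.length h
      simp only [fList_nil, fList_cons, List.length_append] at this
      grind [two_le_length_fm]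
  | cons a u ih =>
    rcases v with _ | ⟨b, v⟩
    · have := congrArg List.length h
      simp only [fList_nil, fList_cons, List.length_append] at this
      grind [two_le_length_fm]
    · simp only [fList_cons, List.append_assoc] at h
      have hpre : ∀ c (w : Word), fm c ++ [0] <+: fm c ++ (fList w ++ [0]) := fun c w => by
        obtain ⟨r, hr⟩ := exists_fList_append_zero_eq_cons w
        exact ⟨r, by simp [hr]⟩
      have hab : a = b := by
        rcases List.prefix_or_prefix_of_prefix (hpre a u) (h ▸ hpre b v) with hp | hp
        · exact eq_of_fm_append_zero_prefix a b hp
        · exact (eq_of_fm_append_zero_prefix b a hp).symm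
      subst hab
      rw [ih (List.append_cancel_left h)]

def blockStart (x : InfWord) (j : ℕ) : ℕ := (fList ((List.range j).map x)).length

theorem blockStart_zero : blockStart x 0 = 0 := rfl

theorem blockStart_succ (j : ℕ) : blockStart x (j + 1) = blockStart x j + (fm (x j)).length := by
  simp [blockStart, List.range_succ]

theorem strictMono_blockStart : StrictMono (blockStart x) :=
  strictMono_nat_of_lt_succ fun j => by
    rw [blockStart_succ]; have := two_le_length_fm (x j); omega

theorem exists_blockStart_le_lt (i : ℕ) :
    ∃ j, blockStart x j ≤ i ∧ i < blockStart x (j + 1) := by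
  induction i with
  | zero => exact ⟨0, le_rfl, strictMono_blockStart Nat.zero_lt_one⟩
  | succ i ih =>
    obtain ⟨j, hj, hij⟩ := ih
    rcases Nat.lt_or_ge (i + 1) (blockStart x (j + 1)) with h | h
    · exact ⟨j, by omega, h⟩
    · have := strictMono_blockStart (x := x) (Nat.lt_add_one (j + 1))
      exact ⟨j + 1, h, by omega⟩

theorem occursAt_range (n : ℕ) : OccursAt x 0 ((List.range n).map x) := by
  simp [OccursAt, List.range_eq_range']

theorem exists_eq_append_of_reverse_cons_eq {α : Type*} {a : α} {u : List α}
    (h : (a :: u).reverse = a :: u) (hu : u ≠ []) : ∃ m, u = m ++ [a] ∧ m.reverse = m := by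
  obtain ⟨m, b, rfl⟩ := (List.eq_nil_or_concat' u).resolve_left hu
  rw [List.reverse_cons, List.reverse_append, List.reverse_singleton, List.singleton_append,
    List.cons_append, List.cons.injEq] at h
  obtain ⟨rfl, h⟩ := h
  exact ⟨m, rfl, List.append_inj_left' h rfl⟩

-- The second conjunct is what decides between the extensions `1` and `2` of `f(v)0`.
def UniqueExt (x : InfWord) (w : Word) : Prop :=
  (∃! a : Fin 3, IsFactor x (a :: (w ++ [a]))) ∧
    ((∃ c d, IsFactor x (c :: (w ++ [d])) ∧ c ≠ 0 ∧ d ≠ 0) →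
      ¬IsFactor x (0 :: (w ++ [0])))

theorem uniqueExt_of_forall_border {w : Word} (hex : ∃ c d, IsFactor x (c :: (w ++ [d])))
    (hforced : ∀ c d, IsFactor x (c :: (w ++ [d])) → c = 0 ∧ d = 0) : UniqueExt x w := by
  obtain ⟨c, d, h⟩ := hex
  obtain ⟨rfl, rfl⟩ := hforced c d h
  exact ⟨⟨0, h, fun a ha => (hforced a a ha).1⟩,
    fun ⟨c, d, hcd, hc, _⟩ _ => hc (hforced c d hcd).1⟩

section FixedPoint

variable (hfix : fInf x = x)
include hfix

theorem occursAt_zero_fList_range (n : ℕ) : OccursAt x 0 (fList ((List.range n).map x)) := by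
  have hmono : ∀ n m, n ≤ m → fList ((List.range n).map x) <+: fList ((List.range m).map x) :=
    fun n m h => by
      obtain ⟨k, rfl⟩ := Nat.exists_eq_add_of_le h
      simp [List.range_add]
  refine List.ext_getElem (by simp) fun i h₁ h₂ => ?_
  have hi : i < (fList ((List.range (i + 1)).map x)).length := by
    have := two_mul_length_le_length_fList ((List.range (i + 1)).map x)
    simp only [List.length_map, List.length_range] at this; omega
  have hx : x i = (fList ((List.range (i + 1)).map x)).getD i 0 := (congrFun hfix i).symm
  rw [List.getElem_map, List.getElem_range', Nat.one_mul, zero_add, hx,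
    List.getD_eq_getElem _ _ hi,    (hmono _ _ (le_max_left (i + 1) n)).getElem hi,
    (hmono _ _ (le_max_right (i + 1) n)).getElem h₂]

theorem occursAt_blockStart_fList {j : ℕ} {v : Word} (hv : OccursAt x j v) :
    OccursAt x (blockStart x j) (fList v) ∧
      blockStart x (j + v.length) = blockStart x j + (fList v).length := by
  have hpre : (List.range (j + v.length)).map x = (List.range j).map x ++ v :=
    (occursAt_range _).eq_of_length_eq
      (occursAt_append.2 ⟨occursAt_range j, by simpa using hv⟩) (by simp)
  have h := occursAt_zero_fList_range hfix (j + v.length)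
  rw [hpre, fList_append, occursAt_append, zero_add] at h
  exact ⟨h.2, by simp [blockStart, hpre]⟩

theorem occursAt_blockStart_fm (j : ℕ) : OccursAt x (blockStart x j) (fm (x j)) := by
  simpa using (occursAt_blockStart_fList hfix (occursAt_singleton.2 rfl : OccursAt x j [x j])).1

theorem apply_blockStart (j : ℕ) : x (blockStart x j) = 0 := by
  have h := occursAt_blockStart_fm hfix j
  rw [fm_eq_cons, occursAt_cons] at h
  exact h.1

theorem occursAt_blockStart_fList_append_zero {j : ℕ} {v : Word} (hv : OccursAt x j v) :
    OccursAt x (blockStart x j) (fList v ++ [0]) := by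
  obtain ⟨h, hlen⟩ := occursAt_blockStart_fList hfix hv
  exact occursAt_append.2 ⟨h, occursAt_singleton.2 (hlen ▸ apply_blockStart hfix _)⟩

theorem isFactor_fList_append_zero {v : Word} (hv : IsFactor x v) :
    IsFactor x (fList v ++ [0]) := by
  obtain ⟨j, hj⟩ := isFactor_iff_exists_occursAt.1 hv
  exact isFactor_iff_exists_occursAt.2 ⟨_, occursAt_blockStart_fList_append_zero hfix hj⟩

theorem exists_eq_blockStart_of_eq_zero {i : ℕ} (h : x i = 0) : ∃ j, i = blockStart x j := by
  obtain ⟨j, hj, hij⟩ := exists_blockStart_le_lt (x := x) i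
  rw [blockStart_succ] at hij
  have hk := (occursAt_blockStart_fm hfix j).getD (k := i - blockStart x j) (by omega)
  rw [Nat.add_sub_cancel' hj, h] at hk
  have := fm_getD_eq_zero (x j) _ (by omega) hk.symm
  exact ⟨j, by omega⟩

theorem exists_occursAt_of_occursAt_fList_append_zero {v : Word} {i : ℕ}
    (h : OccursAt x i (fList v ++ [0])) :
    ∃ j, i = blockStart x j ∧ OccursAt x j v := by
  induction v generalizing i with
  | nil =>
    obtain ⟨j, hj⟩ := exists_eq_blockStart_of_eq_zero hfix (occursAt_singleton.1 h)
    exact ⟨j, hj, rfl⟩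
  | cons a v ih =>
    rw [fList_cons, List.append_assoc, occursAt_append] at h
    obtain ⟨ha, hv⟩ := h
    obtain ⟨j, rfl⟩ := exists_eq_blockStart_of_eq_zero hfix (by
      have := ha; rw [fm_eq_cons, occursAt_cons] at this; exact this.1)
    have hxj : x j = a := by
      obtain ⟨r, hr⟩ := exists_fList_append_zero_eq_cons v
      rw [hr, occursAt_cons] at hv
      have h₁ : OccursAt x (blockStart x j) (fm a ++ [0]) :=
        occursAt_append.2 ⟨ha, occursAt_singleton.2 hv.1⟩
      have h₂ := occursAt_blockStart_fList_append_zero hfix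
        (occursAt_singleton.2 rfl : OccursAt x j [x j])
      simp only [fList_cons, fList_nil, List.append_nil] at h₂
      rcases le_total (fm a ++ [0]).length (fm (x j) ++ [0]).length with hl | hl
      · exact (eq_of_fm_append_zero_prefix _ _ (h₂.isPrefix h₁ hl)).symm
      · exact eq_of_fm_append_zero_prefix _ _ (h₁.isPrefix h₂ hl)
    rw [← hxj, ← blockStart_succ] at hv
    obtain ⟨j', hj', hv'⟩ := ih hv
    rw [← strictMono_blockStart.injective hj'] at hv'
    exact ⟨j, rfl, occursAt_cons.2 ⟨hxj, hv'⟩⟩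

theorem exists_isFactor_eq_fList_append_zero {i : ℕ} {w : Word} (hw : OccursAt x i w)
    (hhead : w.head? = some 0) (hlast : w.getLast? = some 0) :
    ∃ v, IsFactor x v ∧ w = fList v ++ [0] := by
  obtain ⟨u, rfl⟩ := List.head?_eq_some_iff.1 hhead
  obtain ⟨u', hu'⟩ := List.getLast?_eq_some_iff.1 hlast
  obtain ⟨j, hj⟩ := exists_eq_blockStart_of_eq_zero hfix (occursAt_cons.1 hw).1
  obtain ⟨j', hj'⟩ := exists_eq_blockStart_of_eq_zero hfix (by
    rw [hu', occursAt_append, occursAt_singleton] at hw; exact hw.2)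
  have hjj : j ≤ j' := (strictMono_blockStart (x := x)).le_iff_le.1 (by omega)
  have hv : OccursAt x j ((List.range' j (j' - j)).map x) := by simp [OccursAt]
  have hlen := (occursAt_blockStart_fList hfix hv).2
  simp only [List.length_map, List.length_range', Nat.add_sub_cancel' hjj] at hlen
  refine ⟨_, isFactor_iff_exists_occursAt.2 ⟨j, hv⟩, hw.eq_of_length_eq
    (hj ▸ occursAt_blockStart_fList_append_zero hfix hv) ?_⟩
  have := congrArg List.length hu'
  simp only [List.length_cons, List.length_append] at this ⊢
  omega

theorem isFactor_append_fList_iff {s t v : Word} (hs : s ≠ []) (hs₂ : s.length ≤ 2)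
    (ht₂ : t.length ≤ 2) :
    IsFactor x (s ++ (fList v ++ 0 :: t)) ↔
      ∃ c d, IsFactor x (c :: (v ++ [d])) ∧ s <:+ fm c ∧ t <+: (fm d).tail ++ [0] := by
  constructor
  · intro h
    obtain ⟨q, hq⟩ := isFactor_iff_exists_occursAt.1 h
    rw [show s ++ (fList v ++ 0 :: t) = s ++ ((fList v ++ [0]) ++ t) by simp] at hq
    obtain ⟨hsq, hmid⟩ := occursAt_append.1 hq
    obtain ⟨hf, htq⟩ := occursAt_append.1 hmid
    obtain ⟨j, hj, hv⟩ := exists_occursAt_of_occursAt_fList_append_zero hfix hf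
    obtain ⟨j, rfl⟩ : ∃ j₀, j = j₀ + 1 := Nat.exists_eq_succ_of_ne_zero fun h₀ => by
      subst h₀; rw [blockStart_zero] at hj
      exact hs (List.eq_nil_of_length_eq_zero (by omega))
    have hcvd : OccursAt x j (x j :: (v ++ [x (j + 1 + v.length)])) :=
      occursAt_cons.2 ⟨rfl, occursAt_append.2 ⟨hv, occursAt_singleton.2 rfl⟩⟩
    refine ⟨x j, x (j + 1 + v.length), isFactor_iff_exists_occursAt.2 ⟨j, hcvd⟩, ?_, ?_⟩
    · have := blockStart_succ (x := x) j
      exact (occursAt_blockStart_fm hfix j).isSuffix hsq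
        (by have := two_le_length_fm (x j); omega) (by omega)
    · have hB := (occursAt_blockStart_fList hfix hv).2
      have hd := occursAt_blockStart_fList_append_zero hfix (occursAt_singleton.2 rfl :
        OccursAt x (j + 1 + v.length) [x (j + 1 + v.length)])
      rw [fList_cons, fList_nil, List.append_nil, fm_eq_cons, List.cons_append,
        occursAt_cons] at hd
      have hlen : t.length ≤ ((fm (x (j + 1 + v.length))).tail ++ [0]).length := by
        have := two_le_length_fm (x (j + 1 + v.length))
        simp only [List.length_append, List.length_tail, List.length_singleton]; omega
      refine hd.2.isPrefix ?_ hlen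
      convert htq using 1
      simp only [List.length_append, List.length_singleton]; omega
  · rintro ⟨c, d, h, ⟨s', hs'⟩, ⟨t', ht'⟩⟩
    refine (isFactor_fList_append_zero hfix h).of_infix ⟨s', t', ?_⟩
    have hd : fm d ++ [0] = 0 :: (t ++ t') := by
      rw [ht']; conv_lhs => rw [fm_eq_cons]
      rfl
    simp [← hs', hd]

theorem isFactor_one_fList_one_iff (v : Word) :
    IsFactor x (1 :: ((fList v ++ [0]) ++ [1])) ↔ IsFactor x (0 :: (v ++ [0])) := by
  have hc : ∀ c : Fin 3, [1] <:+ fm c ↔ c = 0 := by decide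
  have hd : ∀ d : Fin 3, [1] <+: (fm d).tail ++ [0] ↔ d = 0 := by decide
  simpa [hc, hd] using
    isFactor_append_fList_iff hfix (s := [1]) (t := [1]) (v := v) (by simp) (by simp) (by simp)

theorem isFactor_two_fList_two_iff (v : Word) :
    IsFactor x (2 :: ((fList v ++ [0]) ++ [2])) ↔
      ∃ c d, IsFactor x (c :: (v ++ [d])) ∧ c ≠ 0 ∧ d ≠ 0 := by
  have hc : ∀ c : Fin 3, [2] <:+ fm c ↔ c ≠ 0 := by decide
  have hd : ∀ d : Fin 3, [2] <+: (fm d).tail ++ [0] ↔ d ≠ 0 := by decide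
  simpa [hc, hd] using
    isFactor_append_fList_iff hfix (s := [2]) (t := [2]) (v := v) (by simp) (by simp) (by simp)

theorem isFactor_zero_two_fList_two_zero_iff (v : Word) :
    IsFactor x (0 :: ((2 :: ((fList v ++ [0]) ++ [2])) ++ [0])) ↔
      IsFactor x (2 :: (v ++ [2])) := by
  have hc : ∀ c : Fin 3, [0, 2] <:+ fm c ↔ c = 2 := by decide
  have hd : ∀ d : Fin 3, [2, 0] <+: (fm d).tail ++ [0] ↔ d = 2 := by decide
  simpa [hc, hd] using
    isFactor_append_fList_iff hfix (s := [0, 2]) (t := [2, 0]) (v := v) (by simp) (by simp)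
      (by simp)

theorem isFactor_two_two_fList_two_two_iff (v : Word) :
    IsFactor x (2 :: ((2 :: ((fList v ++ [0]) ++ [2])) ++ [2])) ↔
      IsFactor x (1 :: (v ++ [1])) := by
  have hc : ∀ c : Fin 3, [2, 2] <:+ fm c ↔ c = 1 := by decide
  have hd : ∀ d : Fin 3, [2, 2] <+: (fm d).tail ++ [0] ↔ d = 1 := by decide
  simpa [hc, hd] using
    isFactor_append_fList_iff hfix (s := [2, 2]) (t := [2, 2]) (v := v) (by simp) (by simp)
      (by simp)

theorem exists_isFactor_pair_infix {u : Word} (hu : IsFactor x u) (h₃ : u.length ≤ 3) :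
    ∃ a b, IsFactor x [a, b] ∧ u <:+: fm a ++ fm b := by
  obtain ⟨i, hi⟩ := isFactor_iff_exists_occursAt.1 hu
  obtain ⟨j, hj, hij⟩ := exists_blockStart_le_lt (x := x) i
  have hpair : OccursAt x j [x j, x (j + 1)] := rfl
  refine ⟨x j, x (j + 1), isFactor_iff_exists_occursAt.2 ⟨j, hpair⟩, ?_⟩
  have h := (occursAt_blockStart_fList hfix hpair).1
  simp only [fList_cons, fList_nil, List.append_nil] at h
  rw [blockStart_succ] at hij
  have := two_le_length_fm (x (j + 1))
  exact h.isInfix hi hj (by simp only [List.length_append]; omega)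

theorem mem_of_isFactor_pair {a b : Fin 3} (h : IsFactor x [a, b]) :
    [a, b] ∈ ([[0, 1], [0, 2], [1, 0], [2, 0], [2, 2]] : List Word) := by
  have key : ∀ a b c d : Fin 3, [a, b] <:+: fm c ++ fm d →
      [a, b] ∈ ([[0, 1], [0, 2], [1, 0], [2, 0], [2, 2]] : List Word) := by
    decide
  obtain ⟨c, d, -, hcd⟩ := exists_isFactor_pair_infix hfix h (by simp)
  exact key a b c d hcd

theorem mem_of_isFactor_triple {a b c : Fin 3} (h : IsFactor x [a, b, c]) :
    [a, b, c] ∈ ([[0, 1, 0], [1, 0, 2], [0, 2, 2], [2, 2, 0], [2, 0, 1], [0, 2, 0], [2, 0, 2]] :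
      List Word) := by
  have key : ∀ a b c d e : Fin 3,
      [d, e] ∈ ([[0, 1], [0, 2], [1, 0], [2, 0], [2, 2]] : List Word) →
      [a, b, c] <:+: fm d ++ fm e →
      [a, b, c] ∈ ([[0, 1, 0], [1, 0, 2], [0, 2, 2], [2, 2, 0], [2, 0, 1], [0, 2, 0], [2, 0, 2]] :
        List Word) := by
    decide
  obtain ⟨d, e, hde, h⟩ := exists_isFactor_pair_infix hfix h (by simp)
  exact key a b c d e (mem_of_isFactor_pair hfix hde) h

theorem isFactor_zero : IsFactor x [0] :=
  isFactor_iff_exists_occursAt.2 ⟨0, occursAt_singleton.2 (apply_blockStart hfix 0)⟩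

theorem isFactor_two_two : IsFactor x [2, 2] :=
  (isFactor_fList_append_zero hfix (isFactor_fList_append_zero hfix (isFactor_zero hfix))).of_infix
    (by decide)

theorem isFactor_zero_two_zero : IsFactor x [0, 2, 0] :=
  (isFactor_fList_append_zero hfix (isFactor_fList_append_zero hfix
    (isFactor_fList_append_zero hfix (isFactor_zero hfix)))).of_infix (by decide)

theorem exists_isFactor_border {a : Fin 3} {u : Word} (hw : IsFactor x (a :: u)) (ha : a ≠ 0) :
    ∃ c d, IsFactor x (c :: ((a :: u) ++ [d])) := by
  obtain ⟨i, hi⟩ := isFactor_iff_exists_occursAt.1 hw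
  obtain ⟨i, rfl⟩ : ∃ i₀, i = i₀ + 1 := Nat.exists_eq_succ_of_ne_zero fun h₀ => by
    subst h₀; exact ha ((occursAt_cons.1 hi).1.symm.trans (apply_blockStart hfix 0))
  exact ⟨x i, x (i + 1 + (a :: u).length), isFactor_iff_exists_occursAt.2
    ⟨i, occursAt_cons.2 ⟨rfl, occursAt_append.2 ⟨hi, occursAt_singleton.2 rfl⟩⟩⟩⟩

theorem exists_isFactor_palindrome_eq_fList_append_zero {w : Word} (hw : IsFactor x w)
    (hpal : w.reverse = w) (hhead : w.head? = some 0) :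
    ∃ v, IsFactor x v ∧ v.reverse = v ∧ v.length < w.length ∧ w = fList v ++ [0] := by
  obtain ⟨i, hi⟩ := isFactor_iff_exists_occursAt.1 hw
  obtain ⟨v, hv, rfl⟩ := exists_isFactor_eq_fList_append_zero hfix hi hhead
    (by rw [← List.head?_reverse, hpal, hhead])
  refine ⟨v, hv, fList_append_zero_injective ?_, ?_, rfl⟩
  · rw [← cons_zero_reverse_fList, ← hpal]; simp
  · have := two_mul_length_le_length_fList v
    simp only [List.length_append, List.length_singleton]; omega

theorem uniqueExt_nil : UniqueExt x [] := by
  refine ⟨⟨2, isFactor_two_two hfix, fun a ha => ?_⟩, fun _ h => ?_⟩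
  · have := mem_of_isFactor_pair hfix ha; fin_cases a <;> simp_all
  · simpa using mem_of_isFactor_pair hfix h

theorem uniqueExt_singleton_two : UniqueExt x [2] := by
  refine ⟨⟨0, isFactor_zero_two_zero hfix, fun a ha => ?_⟩, fun ⟨c, d, h, hc, hd⟩ _ => ?_⟩
  · have := mem_of_isFactor_triple hfix ha; fin_cases a <;> simp_all
  · have := mem_of_isFactor_triple hfix h; fin_cases c <;> fin_cases d <;> simp_all

theorem uniqueExt_one_cons {u : Word} (hw : IsFactor x (1 :: u))
    (hpal : (1 :: u).reverse = 1 :: u) : UniqueExt x (1 :: u) := by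
  refine uniqueExt_of_forall_border (exists_isFactor_border hfix hw one_ne_zero)
    fun c d h => ⟨?_, ?_⟩
  · simpa using mem_of_isFactor_pair hfix (a := c) (b := 1)
      (h.of_infix ⟨[], u ++ [d], by simp⟩)
  · rw [← hpal, List.reverse_cons] at h
    simpa using mem_of_isFactor_pair hfix (a := 1) (b := d)
      (h.of_infix ⟨c :: u.reverse, [], by simp⟩)

theorem uniqueExt_two_two_cons {u : Word} (hw : IsFactor x (2 :: 2 :: u))
    (hpal : (2 :: 2 :: u).reverse = 2 :: 2 :: u) : UniqueExt x (2 :: 2 :: u) := by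
  refine uniqueExt_of_forall_border (exists_isFactor_border hfix hw (by decide))
    fun c d h => ⟨?_, ?_⟩
  · simpa using mem_of_isFactor_triple hfix (a := c) (b := 2) (c := 2)
      (h.of_infix ⟨[], u ++ [d], by simp⟩)
  · rw [← hpal, List.reverse_cons, List.reverse_cons] at h
    simpa using mem_of_isFactor_triple hfix (a := 2) (b := 2) (c := d)
      (h.of_infix ⟨c :: u.reverse, [], by simp⟩)

theorem not_isFactor_two_one_cons (u : Word) : ¬IsFactor x (2 :: 1 :: u) := fun h => by
  simpa using mem_of_isFactor_pair hfix (a := 2) (b := 1) (h.of_infix ⟨[], u, by simp⟩)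

theorem uniqueExt_fList_append_zero {v : Word} (hv : UniqueExt x v) :
    UniqueExt x (fList v ++ [0]) := by
  obtain ⟨⟨a, ha, huniq⟩, hnz⟩ := hv
  have hnot0 : ¬IsFactor x (0 :: ((fList v ++ [0]) ++ [0])) := fun h => by
    obtain ⟨r, hr⟩ := exists_fList_append_zero_eq_cons v
    rw [hr] at h
    simpa using mem_of_isFactor_pair hfix (a := 0) (b := 0)
      (h.of_infix ⟨[], r ++ [0], by simp⟩)
  refine ⟨?_, fun _ => hnot0⟩
  by_cases ha0 : a = 0
  · subst ha0
    refine ⟨1, (isFactor_one_fList_one_iff hfix v).2 ha, fun b hb => ?_⟩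
    fin_cases b
    · exact absurd hb hnot0
    · rfl
    · exact absurd ha (hnz ((isFactor_two_fList_two_iff hfix v).1 hb))
  · refine ⟨2, (isFactor_two_fList_two_iff hfix v).2 ⟨a, a, ha, ha0, ha0⟩, fun b hb => ?_⟩
    fin_cases b
    · exact absurd hb hnot0
    · exact absurd (huniq 0 ((isFactor_one_fList_one_iff hfix v).1 hb)).symm ha0
    · rfl

theorem uniqueExt_two_fList_append_zero_two {v : Word}
    (hw : IsFactor x (2 :: ((fList v ++ [0]) ++ [2]))) (hv : UniqueExt x v) :
    UniqueExt x (2 :: ((fList v ++ [0]) ++ [2])) := by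
  obtain ⟨⟨a, ha, huniq⟩, hnz⟩ := hv
  have ha0 : a ≠ 0 := by
    rintro rfl; exact hnz ((isFactor_two_fList_two_iff hfix v).1 hw) ha
  have hnot1 : ∀ d, ¬IsFactor x (1 :: ((2 :: ((fList v ++ [0]) ++ [2])) ++ [d])) := fun d h => by
    simpa using mem_of_isFactor_pair hfix (a := 1) (b := 2) (h.of_infix ⟨[], _, rfl⟩)
  have hext0 := isFactor_zero_two_fList_two_zero_iff hfix v
  have hext2 := isFactor_two_two_fList_two_two_iff hfix v
  refine ⟨?_, fun ⟨c, d, hcd, hc, hd⟩ h0 => ?_⟩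
  · fin_cases a
    · exact absurd rfl ha0
    · refine ⟨2, hext2.2 ha, fun b hb => ?_⟩
      fin_cases b
      · exact absurd (huniq 2 (hext0.1 hb)) (by decide)
      · exact absurd hb (hnot1 1)
      · rfl
    · refine ⟨0, hext0.2 ha, fun b hb => ?_⟩
      fin_cases b
      · rfl
      · exact absurd hb (hnot1 1)
      · exact absurd (huniq 1 (hext2.1 hb)) (by decide)
  · have hd2 : d ≠ 1 := by
      rintro rfl
      simpa using mem_of_isFactor_pair hfix (a := 2) (b := 1)
        (hcd.of_infix ⟨c :: 2 :: (fList v ++ [0]), [], by simp⟩)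
    have hc2 : c ≠ 1 := by rintro rfl; exact hnot1 d hcd
    obtain rfl : c = 2 := by fin_cases c <;> simp_all
    obtain rfl : d = 2 := by fin_cases d <;> simp_all
    exact absurd ((huniq 1 (hext2.1 hcd)).trans (huniq 2 (hext0.1 h0)).symm) (by decide)

theorem uniqueExt_of_isFactor {w : Word} (hw : IsFactor x w) (hpal : w.reverse = w) :
    UniqueExt x w := by
  induction hn : w.length using Nat.strong_induction_on generalizing w with
  | _ n ih =>
  match w, hw, hpal, hn with
  | [], _, _, _ => exact uniqueExt_nil hfix
  | 0 :: u, hw, hpal, hn =>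
    obtain ⟨v, hv, hvpal, hlt, hwv⟩ :=
      exists_isFactor_palindrome_eq_fList_append_zero hfix hw hpal rfl
    rw [hwv]
    exact uniqueExt_fList_append_zero hfix (ih _ (hn ▸ hlt) hv hvpal rfl)
  | 1 :: u, hw, hpal, _ => exact uniqueExt_one_cons hfix hw hpal
  | [2], _, _, _ => exact uniqueExt_singleton_two hfix
  | 2 :: 0 :: u, hw, hpal, hn =>
    obtain ⟨m, hm, hmpal⟩ := exists_eq_append_of_reverse_cons_eq hpal (List.cons_ne_nil _ _)
    have hmhead : m.head? = some 0 := by rcases m with _ | ⟨b, m⟩ <;> simp_all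
    rw [hm] at hw hn ⊢
    obtain ⟨v, hv, hvpal, hlt, rfl⟩ := exists_isFactor_palindrome_eq_fList_append_zero hfix
      (hw.of_infix ⟨[2], [2], by simp⟩) hmpal hmhead
    refine uniqueExt_two_fList_append_zero_two hfix hw (ih _ ?_ hv hvpal rfl)
    simp only [List.length_cons, List.length_append] at hlt hn; omega
  | 2 :: 1 :: u, hw, _, _ => exact absurd hw (not_isFactor_two_one_cons hfix u)
  | 2 :: 2 :: u, hw, hpal, _ => exact uniqueExt_two_two_cons hfix hw hpal

end FixedPoint

end PalindromicExtension

theorem x_unique_palindromic_extension_general (x : InfWord) (hfix : fInf x = x)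
    (w : Word) (hw : IsFactor x w) (hpal : w.reverse = w) :
    ∃! a : Fin 3, IsFactor x (a :: (w ++ [a])) :=
  (PalindromicExtension.uniqueExt_of_isFactor hfix hw hpal).1

/-- Every palindromic factor of `x = f^ω(0)` has a unique palindromic extension
in `x`. -/
theorem x_unique_palindromic_extension (x : InfWord) (hfix : fInf x = x) (h0 : x 0 = 0)
    (w : Word) (hw : IsFactor x w) (hpal : w.reverse = w) :
    ∃! a : Fin 3, IsFactor x (a :: (w ++ [a])) :=
  x_unique_palindromic_extension_general x hfix w hw hpal
end
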